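/- arXiv:1707.08225 — 4 statements merged into one kernel-verified Lean document; each statement's English description precedes it below -/
import Mathlib

section
/- Let F̂ and F be graphs such that there is a surjective graph homomorphism ζ: V(F) → V(F̂). Then for every graph H with t(F̂,H) ≥ δ̂ > 0, we have t(F,H) ≥ δ̂^ℓ, where ℓ = (|V(F)|+1)^{|V(F̂)|}. -/
/-!
Fix a section `rep` of `ζ` and interpolate between `F̂` and its pullback `F̂.comap ζ` through the
graphs `F̂.comapOn ζ D`, which keep only the edges of the pullback inside `D`. For `D = range rep`
this is a copy of `F̂` plus isolated vertices, so its density is `t(F̂,H)`; for `D = univ` it is the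
pullback itself, which contains `F`. Adding the fiber `ζ⁻¹(v)` to `D` replaces the vertex `rep v`
by `k_v = |ζ⁻¹(v)|` twins. Conditioned on the colouring `y` of the vertices outside the fiber, a
fiber vertex has some probability `c(y)` of extending it, and the density changes from the
average of `c` to the average of `c ^ k_v`; by the power-mean inequality it grows from `t` to at
least `t ^ k_v`. Hence `t(F,H) ≥ t(F̂,H) ^ ∏ k_v`, and `∏ k_v ≤ (|V(F)| + 1) ^ |V(F̂)|`.
-/

open Finset

/-- Homomorphism density of `F` in `H`: the fraction of all maps `V(F) → V(H)` that send
every edge of `F` to an edge of `H`. -/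
noncomputable def homDensity {α β : Type*} [Fintype α] [Fintype β]
    (F : SimpleGraph α) (H : SimpleGraph β) : ℝ :=
  (Set.ncard {φ : α → β | ∀ a b, F.Adj a b → H.Adj (φ a) (φ b)} : ℝ) /
    ((Fintype.card β : ℝ) ^ (Fintype.card α))

section FiberCounting

variable {X Y W : Type*} [Fintype X] [Fintype Y] [Finite W]

lemma card_forall_apply_mem_eq_sum (t : Y → Set W) :
    Nat.card {p : Y × (X → W) // ∀ i, p.2 i ∈ t p.1} = ∑ y, Nat.card (t y) ^ Nat.card X := by
  rw [Nat.card_congr (Equiv.subtypeProdEquivSigmaSubtype fun y (x : X → W) => ∀ i, x i ∈ t y),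
    Nat.card_sigma]
  refine Finset.sum_congr rfl fun y _ => ?_
  rw [Nat.card_congr Equiv.subtypePiEquivPi, Nat.card_pi]
  simp

lemma card_apply_mem_eq_sum (x₀ : X) (t : Y → Set W) :
    Nat.card {p : Y × (X → W) // p.2 x₀ ∈ t p.1} =
      ∑ y, Nat.card (t y) * Nat.card W ^ (Nat.card X - 1) := by
  classical
  rw [Nat.card_congr (Equiv.subtypeProdEquivSigmaSubtype fun y (x : X → W) => x x₀ ∈ t y),
    Nat.card_sigma]
  refine Finset.sum_congr rfl fun y _ => ?_
  rw [Nat.card_congr ((Equiv.funSplitAt x₀ W).subtypeEquiv (p := fun x => x x₀ ∈ t y)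
    (q := fun p => p.1 ∈ t y) fun x => Iff.rfl),
    Nat.card_congr Equiv.prodSubtypeFstEquivSubtypeProd]
  simp [Nat.card_fun, Nat.card_eq_fintype_card, Fintype.card_subtype_compl]

lemma card_apply_mem_div_pow_le (x₀ : X) (t : Y → Set W) :
    ((Nat.card {p : Y × (X → W) // p.2 x₀ ∈ t p.1} : ℝ) / Nat.card (Y × (X → W))) ^ Nat.card X ≤
      (Nat.card {p : Y × (X → W) // ∀ i, p.2 i ∈ t p.1} : ℝ) / Nat.card (Y × (X → W)) := by
  have hk : Nat.card X ≠ 0 := Nat.card_ne_zero.2 ⟨⟨x₀⟩, inferInstance⟩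
  rw [card_apply_mem_eq_sum, card_forall_apply_mem_eq_sum, Nat.card_prod, Nat.card_fun]
  set n := Nat.card W
  set k := Nat.card X
  set m := Nat.card Y
  rcases eq_or_ne (m * n ^ k) 0 with h0 | h0
  · rw [h0, Nat.cast_zero, div_zero, div_zero, zero_pow hk]
  have hm : m ≠ 0 := left_ne_zero_of_mul h0
  have hn : n ≠ 0 := fun h => h0 (by simp [h, hk])
  have hmean := Real.pow_arith_mean_le_arith_mean_pow univ (fun _ => (m : ℝ)⁻¹)
    (fun y => (Nat.card (t y) : ℝ) / n) (fun _ _ => by positivity)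
    (by rw [sum_const, card_univ, ← Nat.card_eq_fintype_card, nsmul_eq_mul]; field_simp; rfl)
    (fun _ _ => by positivity) k
  convert hmean using 2 <;> rw [Nat.cast_sum, Finset.sum_div] <;>
    refine Finset.sum_congr rfl fun y _ => ?_ <;> push_cast
  · rw [← pow_sub_one_mul hk (n : ℝ)]
    field_simp
  · rw [div_pow]
    field_simp

end FiberCounting

lemma card_subtype_comp_div_card {α β W : Type*} [Finite α] [Finite W] [Nonempty W]
    {rep : β → α} (hrep : Function.Injective rep) (Q : (β → W) → Prop) :
    (Nat.card {φ : α → W // Q (φ ∘ rep)} : ℝ) / Nat.card (α → W) =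
      Nat.card {ψ : β → W // Q ψ} / Nat.card (β → W) := by
  classical
  have : Finite β := Finite.of_injective rep hrep
  let e : (α → W) ≃ (β → W) × ({a // a ∉ Set.range rep} → W) :=
    (Equiv.piEquivPiSubtypeProd (· ∈ Set.range rep) fun _ => W).trans
      (((Equiv.ofInjective rep hrep).arrowCongr (Equiv.refl W)).symm.prodCongr (Equiv.refl _))
  rw [Nat.card_congr (e.subtypeEquiv (p := fun φ => Q (φ ∘ rep)) (q := fun p => Q p.1)
      fun φ => Iff.rfl), Nat.card_congr e,
    Nat.card_congr Equiv.prodSubtypeFstEquivSubtypeProd, Nat.card_prod, Nat.card_prod,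
    Nat.cast_mul, Nat.cast_mul, mul_div_mul_right]
  exact_mod_cast Nat.card_pos.ne'

namespace SimpleGraph

variable {α β W : Type*}

def comapOn (G : SimpleGraph β) (ζ : α → β) (D : Set α) : SimpleGraph α where
  Adj a b := a ∈ D ∧ b ∈ D ∧ G.Adj (ζ a) (ζ b)
  symm := ⟨fun _ _ h => ⟨h.2.1, h.1, h.2.2.symm⟩⟩
  loopless := ⟨fun _ h => G.irrefl h.2.2⟩

@[simp]
lemma comapOn_univ (G : SimpleGraph β) (ζ : α → β) : G.comapOn ζ Set.univ = G.comap ζ := by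
  ext
  simp [comapOn]

lemma forall_adj_iff_of_forall_not_adj {K : SimpleGraph α} {H : SimpleGraph W} {p : α → Prop}
    (hp : ∀ a b, p a → p b → ¬ K.Adj a b) (φ : α → W) :
    (∀ a b, K.Adj a b → H.Adj (φ a) (φ b)) ↔
      (∀ a, ¬ p a → ∀ b, ¬ p b → K.Adj a b → H.Adj (φ a) (φ b)) ∧
        ∀ a, p a → ∀ b, ¬ p b → K.Adj a b → H.Adj (φ a) (φ b) := by
  refine ⟨fun h => ⟨fun a _ b _ => h a b, fun a _ b _ => h a b⟩, fun ⟨hout, hin⟩ a b hab => ?_⟩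
  by_cases ha : p a <;> by_cases hb : p b
  · exact absurd hab (hp a b ha hb)
  · exact hin a ha b hb hab
  · exact (hin b hb a ha hab.symm).symm
  · exact hout a ha b hb hab

end SimpleGraph

section HomDensity

variable {α β W : Type*} [Fintype α] [Fintype β] [Fintype W]

lemma homDensity_eq_card_div (F : SimpleGraph α) (H : SimpleGraph W) :
    homDensity F H = (Nat.card {φ : α → W // ∀ a b, F.Adj a b → H.Adj (φ a) (φ b)} : ℝ) /
      Nat.card (α → W) := by
  rw [homDensity, ← Nat.card_coe_set_eq, Nat.card_fun, Nat.card_eq_fintype_card (α := W),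
    Nat.card_eq_fintype_card (α := α), Nat.cast_pow]
  rfl

lemma homDensity_nonneg (F : SimpleGraph α) (H : SimpleGraph W) : 0 ≤ homDensity F H := by
  unfold homDensity
  positivity

lemma homDensity_le_one (F : SimpleGraph α) (H : SimpleGraph W) : homDensity F H ≤ 1 := by
  rw [homDensity_eq_card_div]
  exact div_le_one_of_le₀ (by exact_mod_cast Finite.card_subtype_le _) (by positivity)

lemma homDensity_anti {F F' : SimpleGraph α} (h : F ≤ F') (H : SimpleGraph W) :
    homDensity F' H ≤ homDensity F H := by
  have hsub : {φ : α → W | ∀ a b, F'.Adj a b → H.Adj (φ a) (φ b)} ⊆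
      {φ | ∀ a b, F.Adj a b → H.Adj (φ a) (φ b)} := fun φ hφ a b hab => hφ a b (h hab)
  unfold homDensity
  gcongr ?_ / _
  exact_mod_cast Set.ncard_le_ncard hsub

lemma homDensity_comapOn_range [Nonempty W] (G : SimpleGraph β) (H : SimpleGraph W)
    {ζ : α → β} {rep : β → α} (hrep : ∀ u, ζ (rep u) = u) :
    homDensity (G.comapOn ζ (Set.range rep)) H = homDensity G H := by
  have hhom (φ : α → W) : (∀ a b, (G.comapOn ζ (Set.range rep)).Adj a b → H.Adj (φ a) (φ b)) ↔
      ∀ u u', G.Adj u u' → H.Adj ((φ ∘ rep) u) ((φ ∘ rep) u') := by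
    constructor
    · intro h u u' huu'
      exact h _ _ ⟨⟨u, rfl⟩, ⟨u', rfl⟩, by simpa [hrep] using huu'⟩
    · rintro h _ _ ⟨⟨u, rfl⟩, ⟨u', rfl⟩, hadj⟩
      exact h u u' (by simpa [hrep] using hadj)
  rw [homDensity_eq_card_div, homDensity_eq_card_div, Nat.card_congr (Equiv.subtypeEquivRight hhom)]
  exact card_subtype_comp_div_card (Function.LeftInverse.injective hrep)
    (fun ψ => ∀ u u', G.Adj u u' → H.Adj (ψ u) (ψ u'))

omit [Fintype β] in
lemma homDensity_comapOn_pow_le_union_fiber (G : SimpleGraph β) (H : SimpleGraph W) {ζ : α → β}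
    {D : Set α} {v : β} {a₀ : α} (ha₀ : ζ a₀ = v) (hD : ∀ a, ζ a = v → (a ∈ D ↔ a = a₀)) :
    homDensity (G.comapOn ζ D) H ^ Nat.card {a // ζ a = v} ≤
      homDensity (G.comapOn ζ (D ∪ ζ ⁻¹' {v})) H := by
  classical
  let e : (α → W) ≃ ({a // ζ a ≠ v} → W) × ({a // ζ a = v} → W) :=
    (Equiv.piEquivPiSubtypeProd (fun a => ζ a = v) fun _ => W).trans (Equiv.prodComm _ _)
  -- the colours allowed on the fiber given the colouring `y` off it;
  -- empty unless `y` is already a homomorphism off the fiber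
  let t (y : {a // ζ a ≠ v} → W) : Set W :=
    {w | (∀ a b : {a // ζ a ≠ v}, (G.comapOn ζ D).Adj a b → H.Adj (y a) (y b)) ∧
      ∀ b : {a // ζ a ≠ v}, ↑b ∈ D → G.Adj v (ζ b) → H.Adj w (y b)}
  have hfiber (D' : Set α) : ∀ a b, ζ a = v → ζ b = v → ¬ (G.comapOn ζ D').Adj a b :=
    fun a b ha hb hab => G.irrefl (ha ▸ hb ▸ hab.2.2)
  have hhom (φ : α → W) : (∀ a b, (G.comapOn ζ D).Adj a b → H.Adj (φ a) (φ b)) ↔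
      (e φ).2 ⟨a₀, ha₀⟩ ∈ t (e φ).1 := by
    rw [SimpleGraph.forall_adj_iff_of_forall_not_adj (hfiber D)]
    simp only [e, t, Set.mem_ofPred_eq, Equiv.trans_apply, Equiv.piEquivPiSubtypeProd_apply,
      Equiv.prodComm_apply, Prod.swap, Subtype.forall]
    refine and_congr Iff.rfl
      ⟨fun h b hb hbD hadj => h a₀ ha₀ b hb ⟨(hD a₀ ha₀).2 rfl, hbD, ha₀ ▸ hadj⟩,
        fun h a ha b hb ⟨haD, hbD, hadj⟩ => ?_⟩
    obtain rfl := (hD a ha).1 haD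
    exact h b hb hbD (ha ▸ hadj)
  have hhom' (φ : α → W) :
      (∀ a b, (G.comapOn ζ (D ∪ ζ ⁻¹' {v})).Adj a b → H.Adj (φ a) (φ b)) ↔
        ∀ i, (e φ).2 i ∈ t (e φ).1 := by
    have : Nonempty {a // ζ a = v} := ⟨⟨a₀, ha₀⟩⟩
    rw [SimpleGraph.forall_adj_iff_of_forall_not_adj (hfiber _)]
    simp only [e, t, Set.mem_ofPred_eq, forall_and, forall_const]
    simp only [Equiv.trans_apply, Equiv.piEquivPiSubtypeProd_apply, Equiv.prodComm_apply,
      Prod.swap, Subtype.forall, SimpleGraph.comapOn]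
    refine and_congr (forall₂_congr fun a ha => forall₂_congr fun b hb => ?_)
      (forall₂_congr fun a ha => forall₂_congr fun b hb => ?_) <;> simp [ha, hb]
  rw [homDensity_eq_card_div, homDensity_eq_card_div,
    Nat.card_congr (e.subtypeEquiv (q := fun p => p.2 ⟨a₀, ha₀⟩ ∈ t p.1) hhom),
    Nat.card_congr (e.subtypeEquiv (q := fun p => ∀ i, p.2 i ∈ t p.1) hhom'), Nat.card_congr e]
  exact card_apply_mem_div_pow_le _ t

lemma homDensity_pow_prod_card_fiber_le [Nonempty W] (G : SimpleGraph β) (H : SimpleGraph W)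
    {ζ : α → β} (hζ : Function.Surjective ζ) :
    homDensity G H ^ ∏ v, Nat.card {a // ζ a = v} ≤ homDensity (G.comap ζ) H := by
  classical
  set rep := Function.surjInv hζ
  have hrep : ∀ u, ζ (rep u) = u := Function.surjInv_eq hζ
  have hinterp (S : Finset β) : homDensity G H ^ ∏ v ∈ S, Nat.card {a // ζ a = v} ≤
      homDensity (G.comapOn ζ (Set.range rep ∪ ζ ⁻¹' S)) H := by
    induction S using Finset.induction_on with
    | empty => simp [homDensity_comapOn_range G H hrep]
    | insert v S hv ih =>
      have hD (a : α) (ha : ζ a = v) : a ∈ Set.range rep ∪ ζ ⁻¹' S ↔ a = rep v := by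
        subst ha
        refine ⟨?_, fun h => Or.inl ⟨_, h.symm⟩⟩
        rintro (⟨u, rfl⟩ | ha)
        · rw [hrep]
        · exact absurd ha hv
      have hunion : Set.range rep ∪ ζ ⁻¹' ↑(insert v S) =
          Set.range rep ∪ ζ ⁻¹' ↑S ∪ ζ ⁻¹' {v} := by
        ext a
        simp only [coe_insert, Set.mem_union, Set.mem_preimage, Set.mem_insert_iff,
          Set.mem_singleton_iff, mem_coe]
        tauto
      rw [prod_insert hv, mul_comm, pow_mul, hunion]
      exact (pow_le_pow_left₀ (pow_nonneg (homDensity_nonneg G H) _) ih _).trans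
        (homDensity_comapOn_pow_le_union_fiber G H (hrep v) hD)
  simpa using hinterp univ

end HomDensity

/-- If there is a surjective graph homomorphism `ζ : V(F) → V(F̂)`, then for every graph `H`
with `t(F̂,H) ≥ δ̂ > 0` we have `t(F,H) ≥ δ̂ ^ ℓ` with `ℓ = (|V(F)|+1)^{|V(F̂)|}`. -/
theorem stmt2 {α β W : Type*} [Fintype α] [Fintype β] [Fintype W]
    (F : SimpleGraph α) (Fhat : SimpleGraph β) (ζ : α → β)
    (hsurj : Function.Surjective ζ)
    (hhom : ∀ a b, F.Adj a b → Fhat.Adj (ζ a) (ζ b))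
    (H : SimpleGraph W) (δhat : ℝ) (hδ : 0 < δhat)
    (ht : homDensity Fhat H ≥ δhat) :
    homDensity F H ≥ δhat ^ ((Fintype.card α + 1) ^ (Fintype.card β)) := by
  rcases isEmpty_or_nonempty W with hW | hW
  · have : IsEmpty β := not_nonempty_iff.1 fun hβ => by
      have : homDensity Fhat H = 0 := by simp [homDensity]
      linarith
    have : IsEmpty α := ζ.isEmpty
    simpa [homDensity] using ht
  have hδ1 : δhat ≤ 1 := ht.trans (homDensity_le_one Fhat H)
  have hexp : ∏ v, Nat.card {a // ζ a = v} ≤ (Fintype.card α + 1) ^ Fintype.card β :=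
    prod_le_pow_card _ _ _ fun v _ =>
      (Finite.card_subtype_le _).trans (by rw [Nat.card_eq_fintype_card]; omega)
  calc δhat ^ ((Fintype.card α + 1) ^ Fintype.card β)
      ≤ δhat ^ ∏ v, Nat.card {a // ζ a = v} := pow_le_pow_of_le_one hδ.le hδ1 hexp
    _ ≤ homDensity Fhat H ^ ∏ v, Nat.card {a // ζ a = v} := pow_le_pow_left₀ hδ.le ht _
    _ ≤ homDensity (Fhat.comap ζ) H := homDensity_pow_prod_card_fiber_le Fhat H hsurj
    _ ≤ homDensity F H := homDensity_anti (fun a b hab => hhom a b hab) H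
end

section
/- Let G₁, G₂ be graphs on the same vertex set V with |V| = n > 2k, and let 𝒱 = {V_1,...,V_k} be an equipartition of V into exactly k classes (so each |V_i| ≥ n/k - 1, in particular |V_i| ≥ (n-k)/k). Then the distance between the cluster graphs satisfies dist(G₁/𝒱, G₂/𝒱) ≤ (1 + 2k/(n-2k)) · dist(G₁,G₂). -/
/-!
Each class has at least `(n - k)/k` vertices, so every entry `|G₁/𝒱 - G₂/𝒱|(i, j)` is at most
`k²/(n - k)²` times the number of disagreeing pairs in `V_i × V_j`. Summing over the blocks,
which tile `V × V`, gives `dist(G₁/𝒱, G₂/𝒱) ≤ n²/(n - k)² · dist(G₁, G₂)`, and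
`n²/(n - k)² ≤ n/(n - 2k) = 1 + 2k/(n - 2k)` because `n (n - 2k) ≤ (n - k)²`.
-/

open Finset

attribute [local instance] Classical.propDecidable

/-- The cluster-graph edge weight: density of ordered adjacent pairs between classes. -/
noncomputable def clusterW {V : Type*} {k : ℕ} (G : SimpleGraph V)
    (P : Fin k → Finset V) (i j : Fin k) : ℝ :=
  ((((P i) ×ˢ (P j)).filter fun p => G.Adj p.1 p.2).card : ℝ) /
    (((P i).card : ℝ) * ((P j).card : ℝ))

/-- Normalized edit distance between two graphs on the same vertex set
(as 0/1-valued weighted graphs). -/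
noncomputable def distG {V : Type*} [Fintype V] (G₁ G₂ : SimpleGraph V) : ℝ :=
  (∑ u : V, ∑ v : V,
      |(if G₁.Adj u v then (1 : ℝ) else 0) - (if G₂.Adj u v then (1 : ℝ) else 0)|) /
    ((Fintype.card V : ℝ) ^ 2)

/-- Normalized distance between two weighted graphs on `[k]`. -/
noncomputable def distWk {k : ℕ} (R R' : Fin k → Fin k → ℝ) : ℝ :=
  (∑ i : Fin k, ∑ j : Fin k, |R i j - R' i j|) / ((k : ℝ) ^ 2)

lemma Finset.sum_univ_eq_sum_sum_of_biUnion_eq {ι α M : Type*} [Fintype ι] [Fintype α]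
    [DecidableEq α] [AddCommMonoid M] {P : ι → Finset α}
    (hdisj : ∀ i j, i ≠ j → Disjoint (P i) (P j)) (hcover : univ.biUnion P = univ)
    (g : α → M) : ∑ a, g a = ∑ i, ∑ a ∈ P i, g a := by
  rw [← sum_biUnion fun i _ j _ hij => hdisj i j hij, hcover]

lemma Finset.sum_card_le_card_mul_succ {ι α : Type*} [Fintype ι] (P : ι → Finset α)
    (hsize : ∀ i j, (P i).card ≤ (P j).card + 1) (i : ι) :
    ∑ j, (P j).card ≤ Fintype.card ι * ((P i).card + 1) :=
  sum_le_card_nsmul _ _ _ fun j _ => hsize j i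

lemma sq_div_sub_sq_le {n k : ℝ} (hk : 0 ≤ k) (hn : 2 * k < n) :
    n ^ 2 / (n - k) ^ 2 ≤ 1 + 2 * k / (n - 2 * k) := by
  have h2k : 0 < n - 2 * k := by linarith
  rw [one_add_div h2k.ne', div_le_div_iff₀ (by nlinarith) h2k]
  nlinarith [sq_nonneg k]

namespace SimpleGraph

variable {V : Type*}

noncomputable def adjIndicator (G : SimpleGraph V) (u v : V) : ℝ :=
  if G.Adj u v then 1 else 0

noncomputable def adjDist (G₁ G₂ : SimpleGraph V) (u v : V) : ℝ :=
  |G₁.adjIndicator u v - G₂.adjIndicator u v|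

lemma adjDist_nonneg (G₁ G₂ : SimpleGraph V) (u v : V) : 0 ≤ adjDist G₁ G₂ u v :=
  abs_nonneg _

lemma distG_eq [Fintype V] (G₁ G₂ : SimpleGraph V) :
    distG G₁ G₂ = (∑ u, ∑ v, adjDist G₁ G₂ u v) / (Fintype.card V : ℝ) ^ 2 :=
  rfl

lemma distG_nonneg [Fintype V] (G₁ G₂ : SimpleGraph V) : 0 ≤ distG G₁ G₂ := by
  rw [distG_eq]
  exact div_nonneg (sum_nonneg fun u _ => sum_nonneg fun v _ => adjDist_nonneg G₁ G₂ u v)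
    (sq_nonneg _)

variable {k : ℕ} (G₁ G₂ : SimpleGraph V) (P : Fin k → Finset V)

lemma clusterW_eq_sum (G : SimpleGraph V) (i j : Fin k) :
    clusterW G P i j =
      (∑ u ∈ P i, ∑ v ∈ P j, G.adjIndicator u v) / ((P i).card * (P j).card) := by
  rw [clusterW, ← sum_product' (f := fun u v => G.adjIndicator u v)]
  simp only [adjIndicator, sum_boole]

lemma abs_clusterW_sub_le (i j : Fin k) :
    |clusterW G₁ P i j - clusterW G₂ P i j| ≤
      (∑ u ∈ P i, ∑ v ∈ P j, adjDist G₁ G₂ u v) / ((P i).card * (P j).card) := by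
  have hden : (0 : ℝ) ≤ (P i).card * (P j).card := by positivity
  rw [clusterW_eq_sum, clusterW_eq_sum, ← sub_div, abs_div, abs_of_nonneg hden]
  gcongr
  simp only [← sum_sub_distrib]
  exact (abs_sum_le_sum_abs _ _).trans <| sum_le_sum fun u _ => abs_sum_le_sum_abs _ _

lemma distWk_clusterW_le [Fintype V] [DecidableEq V]
    (hdisj : ∀ i j, i ≠ j → Disjoint (P i) (P j)) (hcover : univ.biUnion P = univ)
    {m : ℝ} (hm : 0 < m) (hcard : ∀ i, m ≤ (P i).card) :
    distWk (clusterW G₁ P) (clusterW G₂ P) ≤ (∑ u, ∑ v, adjDist G₁ G₂ u v) / (k * m) ^ 2 := by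
  have hblock : ∀ i j, |clusterW G₁ P i j - clusterW G₂ P i j| ≤
      (∑ u ∈ P i, ∑ v ∈ P j, adjDist G₁ G₂ u v) / m ^ 2 := fun i j => by
    refine (abs_clusterW_sub_le G₁ G₂ P i j).trans ?_
    gcongr
    · exact sum_nonneg fun u _ => sum_nonneg fun v _ => adjDist_nonneg G₁ G₂ u v
    · rw [sq]
      exact mul_le_mul (hcard i) (hcard j) hm.le (hm.le.trans (hcard i))
  have hpart := sum_univ_eq_sum_sum_of_biUnion_eq (M := ℝ) hdisj hcover
  have hblocks : ∑ u, ∑ v, adjDist G₁ G₂ u v =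
      ∑ i, ∑ j, ∑ u ∈ P i, ∑ v ∈ P j, adjDist G₁ G₂ u v := by
    rw [hpart]
    refine sum_congr rfl fun i _ => ?_
    rw [sum_congr rfl fun u _ => hpart (adjDist G₁ G₂ u), sum_comm]
  rw [distWk, mul_pow, mul_comm, ← div_div, hblocks]
  gcongr
  calc ∑ i, ∑ j, |clusterW G₁ P i j - clusterW G₂ P i j|
      ≤ ∑ i, ∑ j, (∑ u ∈ P i, ∑ v ∈ P j, adjDist G₁ G₂ u v) / m ^ 2 :=
        sum_le_sum fun i _ => sum_le_sum fun j _ => hblock i j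
    _ = _ := by simp only [sum_div]

end SimpleGraph

/-- For an equipartition `𝒱` into exactly `k` classes of a vertex set of size `n > 2k`,
`dist(G₁/𝒱, G₂/𝒱) ≤ (1 + 2k/(n-2k)) · dist(G₁,G₂)`. -/
theorem stmt5 {V : Type*} [Fintype V] [DecidableEq V] (G₁ G₂ : SimpleGraph V)
    {k : ℕ} (hk : 0 < k) (P : Fin k → Finset V)
    (hdisj : ∀ i j, i ≠ j → Disjoint (P i) (P j))
    (hcover : Finset.univ.biUnion P = Finset.univ)
    (hsize : ∀ i j, (P i).card ≤ (P j).card + 1)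
    (hn : 2 * k < Fintype.card V) :
    distWk (clusterW G₁ P) (clusterW G₂ P) ≤
      (1 + 2 * (k : ℝ) / ((Fintype.card V : ℝ) - 2 * k)) * distG G₁ G₂ := by
  have hkR : (0 : ℝ) < k := by exact_mod_cast hk
  have hnR : 2 * (k : ℝ) < Fintype.card V := by exact_mod_cast hn
  have hsum : ∑ j, (P j).card = Fintype.card V := by
    rw [← card_univ, ← hcover, card_biUnion fun i _ j _ hij => hdisj i j hij]
  have hcard : ∀ i, ((Fintype.card V : ℝ) - k) / k ≤ (P i).card := fun i => by
    have h := sum_card_le_card_mul_succ P hsize i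
    rw [Fintype.card_fin, hsum] at h
    rw [div_le_iff₀ hkR]
    push_cast [← Nat.cast_le (α := ℝ)] at h
    linarith
  calc distWk (clusterW G₁ P) (clusterW G₂ P)
      ≤ (∑ u, ∑ v, SimpleGraph.adjDist G₁ G₂ u v) / (k * ((Fintype.card V - k) / k)) ^ 2 :=
        SimpleGraph.distWk_clusterW_le G₁ G₂ P hdisj hcover (by bound) hcard
    _ = (Fintype.card V : ℝ) ^ 2 / (Fintype.card V - k) ^ 2 * distG G₁ G₂ := by
        have hV : (Fintype.card V : ℝ) ≠ 0 := by linarith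
        rw [SimpleGraph.distG_eq, mul_div_cancel₀ _ hkR.ne']
        field_simp
    _ ≤ _ := by
        gcongr ?_ * _
        exacts [SimpleGraph.distG_nonneg G₁ G₂, sq_div_sub_sq_le hkR.le hnR]
end

section
/- Let 𝓕 be a family of graphs and R, R' weighted graphs on the same vertex set V. Define z*(R) = (1/|V|²)·max{e(S) : S ≤ R, t(F,S) = 0 for all F ∈ 𝓕}, where e(S) = (1/2)·∑_{(i,j)∈V×V} S(i,j). Then |z*(R) - z*(R')| ≤ (1/2)·dist(R,R'). -/
open Finset

attribute [local instance] Classical.propDecidable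

/-- Homomorphism weight of a map `φ` from the vertices of `F` into a weighted graph `R`. -/
noncomputable def homW {α V : Type*} [Fintype α] (F : SimpleGraph α)
    (R : V → V → ℝ) (φ : α → V) : ℝ :=
  ∏ e ∈ F.edgeFinset, R (φ (Quot.out e).1) (φ (Quot.out e).2)

/-- Homomorphism density of `F` in a weighted graph `R`. -/
noncomputable def tW {α V : Type*} [Fintype α] [Fintype V] (F : SimpleGraph α)
    (R : V → V → ℝ) : ℝ :=
  (∑ φ : α → V, homW F R φ) / ((Fintype.card V : ℝ) ^ (Fintype.card α))

/-- Total edge weight of a weighted graph. -/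
noncomputable def eW {V : Type*} [Fintype V] (R : V → V → ℝ) : ℝ :=
  (∑ i, ∑ j, R i j) / 2

/-- Normalized edit distance between two weighted graphs on the same vertex set. -/
noncomputable def distW {V : Type*} [Fintype V] (R R' : V → V → ℝ) : ℝ :=
  (∑ i, ∑ j, |R i j - R' i j|) / ((Fintype.card V : ℝ) ^ 2)

/-- `z*(R)`: the largest edge weight of a spanning subgraph of `R` that is
`𝓕`-free in the homomorphism sense, normalized by `|V|²`. -/
noncomputable def zstar {V ι : Type*} [Fintype V] (nF : ι → ℕ)
    (F : ∀ i, SimpleGraph (Fin (nF i))) (R : V → V → ℝ) : ℝ :=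
  sSup {x : ℝ | ∃ S : V → V → ℝ, (∀ a b, S a b = S b a) ∧ (∀ a b, 0 ≤ S a b) ∧
      (∀ a b, S a b ≤ R a b) ∧ (∀ i, tW (F i) S = 0) ∧ x = eW S} /
    ((Fintype.card V : ℝ) ^ 2)

/-
Taking `S ↦ min S R'` sends every `𝓕`-free subgraph `S ≤ R` to an `𝓕`-free subgraph of `R'`
(homomorphism densities are monotone in the weights, so a zero density stays zero), and it
loses at most `|R - R'|` in every entry. Hence the maximal edge weight for `R'` is at least
that for `R` minus half the `ℓ¹`-distance, and symmetrically.
-/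

open Finset

section WeightedGraph

variable {V : Type*} [Fintype V]

lemma tW_nonneg {α : Type*} [Fintype α] (F : SimpleGraph α) {S : V → V → ℝ}
    (hS : ∀ a b, 0 ≤ S a b) : 0 ≤ tW F S :=
  div_nonneg (sum_nonneg fun _ _ => prod_nonneg fun _ _ => hS _ _) (by positivity)

lemma tW_mono {α : Type*} [Fintype α] (F : SimpleGraph α) {S T : V → V → ℝ}
    (hS : ∀ a b, 0 ≤ S a b) (hST : ∀ a b, S a b ≤ T a b) : tW F S ≤ tW F T := by
  unfold tW homW
  gcongr with φ _ e _
  · exact fun _ _ => hS _ _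
  · exact hST _ _

lemma tW_eq_zero_of_le {α : Type*} [Fintype α] (F : SimpleGraph α) {S T : V → V → ℝ}
    (hS : ∀ a b, 0 ≤ S a b) (hST : ∀ a b, S a b ≤ T a b) (hT : tW F T = 0) : tW F S = 0 :=
  le_antisymm (hT ▸ tW_mono F hS hST) (tW_nonneg F hS)

lemma eW_nonneg {S : V → V → ℝ} (hS : ∀ a b, 0 ≤ S a b) : 0 ≤ eW S :=
  div_nonneg (sum_nonneg fun _ _ => sum_nonneg fun _ _ => hS _ _) zero_le_two

lemma eW_mono {S T : V → V → ℝ} (hST : ∀ a b, S a b ≤ T a b) : eW S ≤ eW T := by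
  unfold eW
  gcongr with a _ b _
  exact hST a b

lemma eW_le_eW_min_add {S R R' : V → V → ℝ} (hSR : ∀ a b, S a b ≤ R a b) :
    eW S ≤ eW (fun a b => min (S a b) (R' a b)) + (∑ a, ∑ b, |R a b - R' a b|) / 2 := by
  unfold eW
  rw [← add_div, ← sum_add_distrib]
  gcongr with a _
  rw [← sum_add_distrib]
  gcongr with b _
  dsimp only
  rcases le_total (S a b) (R' a b) with h | h
  · rw [min_eq_left h]
    linarith [abs_nonneg (R a b - R' a b)]
  · rw [min_eq_right h]
    linarith [hSR a b, le_abs_self (R a b - R' a b)]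

end WeightedGraph

section FreeSubgraphs

variable {V ι : Type*} [Fintype V] (nF : ι → ℕ) (F : ∀ i, SimpleGraph (Fin (nF i)))

def freeSubgraphWeights (R : V → V → ℝ) : Set ℝ :=
  {x : ℝ | ∃ S : V → V → ℝ, (∀ a b, S a b = S b a) ∧ (∀ a b, 0 ≤ S a b) ∧
      (∀ a b, S a b ≤ R a b) ∧ (∀ i, tW (F i) S = 0) ∧ x = eW S}

lemma zstar_eq (R : V → V → ℝ) :
    zstar nF F R = sSup (freeSubgraphWeights nF F R) / (Fintype.card V : ℝ) ^ 2 :=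
  rfl

lemma bddAbove_freeSubgraphWeights (R : V → V → ℝ) :
    BddAbove (freeSubgraphWeights nF F R) := by
  refine ⟨eW R, ?_⟩
  rintro x ⟨S, -, -, hSR, -, rfl⟩
  exact eW_mono hSR

lemma sSup_freeSubgraphWeights_nonneg (R : V → V → ℝ) :
    0 ≤ sSup (freeSubgraphWeights nF F R) :=
  Real.sSup_nonneg fun _ ⟨_, _, hS0, _, _, hx⟩ => hx ▸ eW_nonneg hS0

lemma min_mem_freeSubgraphWeights {R' S : V → V → ℝ} (hR'sym : ∀ a b, R' a b = R' b a)
    (hR'0 : ∀ a b, 0 ≤ R' a b) (hSsym : ∀ a b, S a b = S b a) (hS0 : ∀ a b, 0 ≤ S a b)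
    (hSF : ∀ i, tW (F i) S = 0) :
    eW (fun a b => min (S a b) (R' a b)) ∈ freeSubgraphWeights nF F R' := by
  have hmin0 : ∀ a b, 0 ≤ min (S a b) (R' a b) := fun a b => le_min (hS0 a b) (hR'0 a b)
  exact ⟨_, fun a b => by rw [hSsym, hR'sym], hmin0, fun _ _ => min_le_right _ _,
    fun i => tW_eq_zero_of_le (F i) hmin0 (fun _ _ => min_le_left _ _) (hSF i), rfl⟩

lemma sSup_freeSubgraphWeights_le {R R' : V → V → ℝ} (hR'sym : ∀ a b, R' a b = R' b a)
    (hR'0 : ∀ a b, 0 ≤ R' a b) :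
    sSup (freeSubgraphWeights nF F R) ≤
      sSup (freeSubgraphWeights nF F R') + (∑ a, ∑ b, |R a b - R' a b|) / 2 := by
  refine Real.sSup_le ?_ (by positivity [sSup_freeSubgraphWeights_nonneg nF F R'])
  rintro x ⟨S, hSsym, hS0, hSR, hSF, rfl⟩
  calc eW S ≤ eW (fun a b => min (S a b) (R' a b)) + (∑ a, ∑ b, |R a b - R' a b|) / 2 :=
        eW_le_eW_min_add hSR
    _ ≤ _ := by
      gcongr
      exact le_csSup (bddAbove_freeSubgraphWeights nF F R')
        (min_mem_freeSubgraphWeights nF F hR'sym hR'0 hSsym hS0 hSF)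

lemma abs_sSup_freeSubgraphWeights_sub_le {R R' : V → V → ℝ}
    (hRsym : ∀ a b, R a b = R b a) (hR0 : ∀ a b, 0 ≤ R a b)
    (hR'sym : ∀ a b, R' a b = R' b a) (hR'0 : ∀ a b, 0 ≤ R' a b) :
    |sSup (freeSubgraphWeights nF F R) - sSup (freeSubgraphWeights nF F R')| ≤
      (∑ a, ∑ b, |R a b - R' a b|) / 2 := by
  have hswap := sSup_freeSubgraphWeights_le nF F (R := R') hRsym hR0
  simp only [abs_sub_comm (R' _ _)] at hswap
  rw [abs_sub_le_iff]
  constructor <;> linarith [sSup_freeSubgraphWeights_le nF F (R := R) hR'sym hR'0]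

end FreeSubgraphs

theorem stmt6_general {V ι : Type*} [Fintype V] (nF : ι → ℕ)
    (F : ∀ i, SimpleGraph (Fin (nF i)))
    (R R' : V → V → ℝ)
    (hRsym : ∀ a b, R a b = R b a) (hR0 : ∀ a b, 0 ≤ R a b)
    (hR'sym : ∀ a b, R' a b = R' b a) (hR'0 : ∀ a b, 0 ≤ R' a b) :
    |zstar nF F R - zstar nF F R'| ≤ (1 / 2) * distW R R' := by
  rw [zstar_eq, zstar_eq, div_sub_div_same, abs_div, abs_sq,
    distW, ← mul_div_assoc, one_div_mul_eq_div]
  exact div_le_div_of_nonneg_right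
    (abs_sSup_freeSubgraphWeights_sub_le nF F hRsym hR0 hR'sym hR'0) (sq_nonneg _)

/-- The parameter `z*` is Lipschitz with constant `1/2` with respect to the
normalized distance between weighted graphs. -/
theorem stmt6 {V ι : Type*} [Fintype V] (nF : ι → ℕ)
    (F : ∀ i, SimpleGraph (Fin (nF i)))
    (hedge : ∀ i, ∃ a b, (F i).Adj a b)
    (R R' : V → V → ℝ)
    (hRsym : ∀ a b, R a b = R b a) (hR0 : ∀ a b, 0 ≤ R a b) (hR1 : ∀ a b, R a b ≤ 1)
    (hR'sym : ∀ a b, R' a b = R' b a) (hR'0 : ∀ a b, 0 ≤ R' a b) (hR'1 : ∀ a b, R' a b ≤ 1) :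
    |zstar nF F R - zstar nF F R'| ≤ (1 / 2) * distW R R' :=
  stmt6_general nF F R R' hRsym hR0 hR'sym hR'0
end

section
/- Let r ≥ 1 and 0 < ε ≤ 1, and let G be an r-colorable graph on n vertices, where k = ⌈r/ε⌉ divides n and n is sufficiently large. Then there exists an equipartition 𝒱 of V(G) into k classes of size n/k each, and a weighted graph S on [k] with S ≤ G/𝒱, such that t(K_{r+1}, S) = 0 (indeed S is r-partite as a weighted graph: [k] can be partitioned into r classes with S vanishing within each class) and dist(G/𝒱, S) ≤ ε. -/
open Finset

attribute [local instance] Classical.propDecidable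

/-!
Sort the vertices by color and cut the sorted sequence into `k` consecutive blocks of equal
size, giving each block the color of its last vertex. Since colors increase along the sequence,
a block with the same color as an earlier block is monochromatic; so every color class of
blocks contains at most one block that is not monochromatic, and two monochromatic blocks of the
same color span no edge. Within a color class only pairs meeting its exceptional block carry
weight, at most `2k` ordered pairs overall, each of density at most `1`. Deleting the weight inside
the color classes therefore leaves an `r`-partite `S ≤ G/𝒱` with
`dist(G/𝒱, S) ≤ 2k / k² ≤ r / k ≤ ε` (for `r ≤ 1` the graph has no edges at all).
-/

open Function

theorem exists_equiv_monotone_comp {α β γ : Type*} [Fintype α] [LinearOrder α] [Fintype β]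
    [LinearOrder γ] (h : Fintype.card α = Fintype.card β) (f : β → γ) :
    ∃ e : α ≃ β, Monotone (f ∘ e) := by
  let σ := Fintype.equivFin β
  let o := Fintype.orderIsoFinOfCardEq α h
  refine ⟨o.symm.toEquiv.trans ((Tuple.sort (f ∘ σ.symm)).trans σ.symm), ?_⟩
  exact (Tuple.monotone_sort (f ∘ σ.symm)).comp o.symm.monotone

theorem Monotone.apply_toLex_eq_of_lt {α β γ : Type*} [Preorder α] [Preorder β] [OrderTop β]
    [PartialOrder γ] {g : α ×ₗ β → γ} (hg : Monotone g) {i j : α} (hij : i < j)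
    (h : g (toLex (i, ⊤)) = g (toLex (j, ⊤))) (t : β) : g (toLex (j, t)) = g (toLex (j, ⊤)) :=
  le_antisymm (hg (Prod.Lex.toLex_le_toLex.2 (Or.inr ⟨rfl, le_top⟩)))
    (h ▸ hg (Prod.Lex.toLex_le_toLex.2 (Or.inl hij)))

section Blocks

variable {ι κ V : Type*} [Fintype κ]

def blocks (e : ι × κ ≃ V) (i : ι) : Finset V :=
  univ.map ((Embedding.sectR i κ).trans e.toEmbedding)

theorem mem_blocks {e : ι × κ ≃ V} {i : ι} {v : V} : v ∈ blocks e i ↔ ∃ t, e (i, t) = v := by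
  simp [blocks]

theorem card_blocks (e : ι × κ ≃ V) (i : ι) : (blocks e i).card = Fintype.card κ := by
  simp [blocks]

theorem disjoint_blocks (e : ι × κ ≃ V) {i j : ι} (hij : i ≠ j) :
    Disjoint (blocks e i) (blocks e j) :=
  disjoint_left.2 fun _ hi hj => by
    obtain ⟨t, rfl⟩ := mem_blocks.1 hi
    obtain ⟨t', h⟩ := mem_blocks.1 hj
    exact hij (congrArg Prod.fst (e.injective h)).symm

theorem biUnion_blocks [Fintype ι] [Fintype V] [DecidableEq V] (e : ι × κ ≃ V) :
    univ.biUnion (blocks e) = univ :=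
  eq_univ_of_forall fun _ => mem_biUnion.2 ⟨_, mem_univ _, mem_blocks.2 ⟨_, e.apply_symm_apply _⟩⟩

end Blocks

section ClusterGraph

variable {V : Type*} {k : ℕ} (G : SimpleGraph V) (P : Fin k → Finset V)

theorem clusterW_nonneg (i j : Fin k) : 0 ≤ clusterW G P i j := by
  unfold clusterW
  positivity

theorem clusterW_comm (i j : Fin k) : clusterW G P i j = clusterW G P j i := by
  unfold clusterW
  rw [mul_comm]
  congr 2
  refine card_bij' (fun p _ => p.swap) (fun p _ => p.swap) ?_ ?_ (by simp) (by simp) <;>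
    simp +contextual [G.adj_comm]

theorem clusterW_le_one (i j : Fin k) : clusterW G P i j ≤ 1 := by
  unfold clusterW
  refine div_le_one_of_le₀ ?_ (by positivity)
  rw [← Nat.cast_mul, ← card_product]
  exact_mod_cast card_filter_le _ _

theorem clusterW_eq_zero_of_forall_not_adj {i j : Fin k}
    (h : ∀ u ∈ P i, ∀ v ∈ P j, ¬ G.Adj u v) : clusterW G P i j = 0 := by
  rw [clusterW, filter_false_of_mem fun p hp => h _ (mem_product.1 hp).1 _ (mem_product.1 hp).2]
  simp

theorem clusterW_eq_zero_of_coloring {γ : Type*} [Subsingleton γ] (C : G.Coloring γ)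
    (i j : Fin k) : clusterW G P i j = 0 :=
  clusterW_eq_zero_of_forall_not_adj G P fun _ _ _ _ hadj => C.valid hadj (Subsingleton.elim _ _)

end ClusterGraph

theorem sum_sameColor_le_two_mul_card {ι κ : Type*} [Fintype ι] [DecidableEq κ] (c : ι → κ)
    (L : Finset ι) (hL : Set.InjOn c L) (W : ι → ι → ℝ) (hW1 : ∀ i j, W i j ≤ 1)
    (hW : ∀ i j, c i = c j → i ∉ L → j ∉ L → W i j = 0) :
    ∑ i, ∑ j, (if c i = c j then W i j else 0) ≤ 2 * Fintype.card ι := by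
  have hclass : ∀ i, #{j | j ∈ L ∧ c i = c j} ≤ 1 := fun i => by
    refine card_le_one.2 fun a ha b hb => ?_
    simp only [mem_filter, mem_univ, true_and] at ha hb
    exact hL ha.1 hb.1 (ha.2.symm.trans hb.2)
  calc ∑ i, ∑ j, (if c i = c j then W i j else 0)
      ≤ ∑ i, ∑ j,
          ((if j ∈ L ∧ c i = c j then 1 else 0) + (if i ∈ L ∧ c j = c i then 1 else 0)) := by
        gcongr with i _ j _
        by_cases hij : c i = c j
        · by_cases hi : i ∈ L <;> by_cases hj : j ∈ L <;> simp [hij, hi, hj, hW] <;>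
            linarith [hW1 i j]
        · simp [hij, Ne.symm hij]
    _ = ∑ i, (#{j | j ∈ L ∧ c i = c j} + #{j | j ∈ L ∧ c i = c j} : ℝ) := by
        simp only [sum_add_distrib]
        rw [sum_comm (f := fun i j => if i ∈ L ∧ c j = c i then (1 : ℝ) else 0)]
        simp [sum_boole]
    _ ≤ ∑ _i : ι, (1 + 1 : ℝ) := by
        gcongr with i <;> exact_mod_cast hclass i
    _ = 2 * Fintype.card ι := by simp; ring

section CrossPart

variable {ι κ : Type*} [DecidableEq κ] (c : ι → κ) (W : ι → ι → ℝ)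

def crossPart (i j : ι) : ℝ := if c i = c j then 0 else W i j

variable {c W}

theorem crossPart_eq_zero {i j : ι} (h : c i = c j) : crossPart c W i j = 0 := if_pos h

theorem crossPart_comm (hW : ∀ i j, W i j = W j i) (i j : ι) :
    crossPart c W i j = crossPart c W j i := by
  simp only [crossPart, eq_comm (a := c i), hW i j]

theorem crossPart_nonneg (hW : ∀ i j, 0 ≤ W i j) (i j : ι) : 0 ≤ crossPart c W i j := by
  unfold crossPart
  split_ifs
  exacts [le_rfl, hW i j]

theorem crossPart_le (hW : ∀ i j, 0 ≤ W i j) (i j : ι) : crossPart c W i j ≤ W i j := by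
  unfold crossPart
  split_ifs
  exacts [hW i j, le_rfl]

theorem abs_sub_crossPart (hW : ∀ i j, 0 ≤ W i j) (i j : ι) :
    |W i j - crossPart c W i j| = if c i = c j then W i j else 0 := by
  unfold crossPart
  split_ifs
  · simp [abs_of_nonneg (hW i j)]
  · simp

end CrossPart

theorem tW_top_eq_zero_of_coloring {α V κ : Type*} [Fintype α] [Fintype V] [Fintype κ]
    (hκ : Fintype.card κ < Fintype.card α) {R : V → V → ℝ} (c : V → κ)
    (hR : ∀ i j, c i = c j → R i j = 0) : tW (⊤ : SimpleGraph α) R = 0 := by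
  suffices h : ∀ φ : α → V, homW ⊤ R φ = 0 by simp [tW, h]
  intro φ
  obtain ⟨a, b, hab, hc⟩ := Fintype.exists_ne_map_eq_of_card_lt (c ∘ φ) hκ
  refine prod_eq_zero (i := s(a, b)) (by simpa using hab) (hR _ _ ?_)
  have hout : s((Quot.out s(a, b)).1, (Quot.out s(a, b)).2) = s(a, b) := Quot.out_eq _
  rcases Sym2.eq_iff.1 hout with ⟨ha, hb⟩ | ⟨ha, hb⟩
  · simpa [ha, hb] using hc
  · simpa [ha, hb] using hc.symm

theorem exists_equipartition_sum_sameColor_clusterW_le {V γ : Type*} [Fintype V] [DecidableEq V]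
    [LinearOrder γ] [DecidableEq γ] {G : SimpleGraph V} (C : G.Coloring γ) {k m : ℕ}
    (hV : Fintype.card V = k * (m + 1)) :
    ∃ P : Fin k → Finset V, (∀ i j, i ≠ j → Disjoint (P i) (P j)) ∧ univ.biUnion P = univ ∧
      (∀ i, #(P i) = m + 1) ∧ ∃ c : Fin k → γ,
        ∑ i, ∑ j, (if c i = c j then clusterW G P i j else 0) ≤ 2 * k := by
  obtain ⟨e, he⟩ := exists_equiv_monotone_comp (α := Fin k ×ₗ Fin (m + 1)) (by simp [hV]) C
  let P := blocks (toLex.trans e)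
  let c i := C (e (toLex (i, ⊤)))
  have hpure : ∀ i j, i < j → c i = c j → ∀ v ∈ P j, C v = c j := by
    intro i j hij hc v hv
    obtain ⟨t, rfl⟩ := mem_blocks.1 hv
    exact he.apply_toLex_eq_of_lt hij hc t
  let L := univ.filter fun i => ∃ v ∈ P i, C v ≠ c i
  have hL : Set.InjOn c L := by
    intro i hi j hj hc
    simp only [L, coe_filter, mem_univ, true_and, Set.mem_ofPred_eq] at hi hj
    rcases lt_trichotomy i j with hij | hij | hij
    · obtain ⟨v, hv, hne⟩ := hj
      exact absurd (hpure i j hij hc v hv) hne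
    · exact hij
    · obtain ⟨v, hv, hne⟩ := hi
      exact absurd (hpure j i hij hc.symm v hv) hne
  refine ⟨P, fun i j => disjoint_blocks _, biUnion_blocks _, fun i => by simp [P, card_blocks],
    c, ?_⟩
  refine (sum_sameColor_le_two_mul_card c L hL _ (clusterW_le_one G P)
    fun i j hc hi hj => ?_).trans_eq (by rw [Fintype.card_fin])
  simp only [L, mem_filter, mem_univ, true_and, not_exists, not_and, not_not] at hi hj
  exact clusterW_eq_zero_of_forall_not_adj G P fun u hu v hv hadj =>
    C.valid hadj (by rw [hi u hu, hj v hv, hc])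

theorem stmt10_general (r : ℕ) (ε : ℝ) (hε0 : 0 < ε)
    (k : ℕ) (hk : k = ⌈(r : ℝ) / ε⌉₊) :
    ∃ n₀ : ℕ, ∀ (V : Type) (_ : Fintype V) (_ : DecidableEq V) (G : SimpleGraph V),
      G.Colorable r → k ∣ Fintype.card V → n₀ ≤ Fintype.card V →
      ∃ P : Fin k → Finset V,
        (∀ i j, i ≠ j → Disjoint (P i) (P j)) ∧
        (Finset.univ.biUnion P = Finset.univ) ∧
        (∀ i, (P i).card = Fintype.card V / k) ∧
        ∃ S : Fin k → Fin k → ℝ,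
          (∀ i j, S i j = S j i) ∧ (∀ i j, 0 ≤ S i j) ∧
          (∀ i j, S i j ≤ clusterW G P i j) ∧
          (∃ c : Fin k → Fin r, ∀ i j, c i = c j → S i j = 0) ∧
          tW (⊤ : SimpleGraph (Fin (r + 1))) S = 0 ∧
          distWk (clusterW G P) S ≤ ε := by
  refine ⟨1, fun V _ _ G ⟨C⟩ ⟨m, hm⟩ hn => ?_⟩
  obtain ⟨m, rfl⟩ := Nat.exists_eq_add_one.2 (Nat.pos_of_mul_pos_left (hm ▸ hn))
  have hk0 : 0 < k := Nat.pos_of_mul_pos_right (hm ▸ hn)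
  have hrk : (r : ℝ) ≤ ε * k := by
    rw [hk, ← div_le_iff₀' hε0]
    exact Nat.le_ceil _
  obtain ⟨P, hdisj, hcover, hcard, c, hsum⟩ := exists_equipartition_sum_sameColor_clusterW_le C hm
  have hW := clusterW_nonneg G P
  refine ⟨P, hdisj, hcover, fun i => by rw [hcard, hm, Nat.mul_div_cancel_left _ hk0],
    crossPart c (clusterW G P), crossPart_comm (clusterW_comm G P), crossPart_nonneg hW,
    crossPart_le hW, ⟨c, fun _ _ => crossPart_eq_zero⟩,
    tW_top_eq_zero_of_coloring (by simp) c fun _ _ => crossPart_eq_zero, ?_⟩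
  rw [distWk, div_le_iff₀ (by positivity)]
  simp only [abs_sub_crossPart hW]
  obtain hr | hr := le_or_gt r 1
  · have := Fin.subsingleton_iff_le_one.2 hr
    simp only [clusterW_eq_zero_of_coloring G P C, ite_self, sum_const_zero]
    positivity
  · calc _ ≤ 2 * (k : ℝ) := hsum
      _ ≤ r * k := by gcongr; exact_mod_cast hr
      _ ≤ ε * k * k := by gcongr
      _ = ε * k ^ 2 := by ring

/-- `r`-colorability is `f`-recoverable with `f(ε) = r/ε`: every `r`-colorable graph on a
sufficiently large vertex set whose size is divisible by `k = ⌈r/ε⌉` admits an equipartition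
into `k` classes of size `n/k`, together with an `r`-partite weighted subgraph `S` of the
cluster graph with `t(K_{r+1},S) = 0` and `dist(G/𝒱,S) ≤ ε`. -/
theorem stmt10 (r : ℕ) (hr : 1 ≤ r) (ε : ℝ) (hε0 : 0 < ε) (hε1 : ε ≤ 1)
    (k : ℕ) (hk : k = ⌈(r : ℝ) / ε⌉₊) :
    ∃ n₀ : ℕ, ∀ (V : Type) (_ : Fintype V) (_ : DecidableEq V) (G : SimpleGraph V),
      G.Colorable r → k ∣ Fintype.card V → n₀ ≤ Fintype.card V →
      ∃ P : Fin k → Finset V,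
        (∀ i j, i ≠ j → Disjoint (P i) (P j)) ∧
        (Finset.univ.biUnion P = Finset.univ) ∧
        (∀ i, (P i).card = Fintype.card V / k) ∧
        ∃ S : Fin k → Fin k → ℝ,
          (∀ i j, S i j = S j i) ∧ (∀ i j, 0 ≤ S i j) ∧
          (∀ i j, S i j ≤ clusterW G P i j) ∧
          (∃ c : Fin k → Fin r, ∀ i j, c i = c j → S i j = 0) ∧
          tW (⊤ : SimpleGraph (Fin (r + 1))) S = 0 ∧
          distWk (clusterW G P) S ≤ ε :=
  stmt10_general r ε hε0 k hk
end
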